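/- (Combing and cabling commute, general q-strand cable) Let m ≥ 2, n ≥ 1, 1 ≤ k ≤ m−1 and 1 ≤ q ≤ n. In the mixed braid group B_{m,n}, set C_j := ∏_{l=0}^{q−1} λ_{l,1} a_j λ_{l,1}^{−1} (the positive looping of a q-strand cable around the j-th fixed strand, product left to right in increasing l). Then combing the cable as a single thickened strand equals combing its strands one by one: C_{k+1}^{−1} C_k C_{k+1} = ∏_{l=0}^{q−1} λ_{l,1} (a_{k+1}^{−1} a_k a_{k+1}) λ_{l,1}^{−1}. -/

import Mathlib

/-- The free-group generator corresponding to the loop generator `a_{i+1}`. -/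
def genA (m n : ℕ) (i : Fin m) : FreeGroup (Fin m ⊕ Fin (n - 1)) :=
  FreeGroup.of (Sum.inl i)

/-- The free-group generator corresponding to the braiding generator `σ_{k+1}`. -/
def genS (m n : ℕ) (k : Fin (n - 1)) : FreeGroup (Fin m ⊕ Fin (n - 1)) :=
  FreeGroup.of (Sum.inr k)

/-- The defining relations of the mixed braid group `B_{m,n}`:
`σ_k σ_j = σ_j σ_k` for `|k-j| > 1`; `σ_k σ_{k+1} σ_k = σ_{k+1} σ_k σ_{k+1}`;
`a_i σ_k = σ_k a_i` for `k ≥ 2`; `a_i σ_1 a_i σ_1 = σ_1 a_i σ_1 a_i`;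
`a_i (σ_1 a_r σ_1⁻¹) = (σ_1 a_r σ_1⁻¹) a_i` for `r < i`.
(Indices of generators are 0-based: `Sum.inl i ↦ a_{i+1}`, `Sum.inr k ↦ σ_{k+1}`.) -/
def mixedRels (m n : ℕ) : Set (FreeGroup (Fin m ⊕ Fin (n - 1))) :=
  {x | ∃ k j : Fin (n - 1), (k : ℕ) + 2 ≤ (j : ℕ) ∧
      x = genS m n k * genS m n j * (genS m n k)⁻¹ * (genS m n j)⁻¹} ∪
  {x | ∃ k j : Fin (n - 1), (k : ℕ) + 1 = (j : ℕ) ∧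
      x = genS m n k * genS m n j * genS m n k *
          (genS m n j)⁻¹ * (genS m n k)⁻¹ * (genS m n j)⁻¹} ∪
  {x | ∃ (i : Fin m) (k : Fin (n - 1)), 1 ≤ (k : ℕ) ∧
      x = genA m n i * genS m n k * (genA m n i)⁻¹ * (genS m n k)⁻¹} ∪
  {x | ∃ (i : Fin m) (k : Fin (n - 1)), (k : ℕ) = 0 ∧
      x = genA m n i * genS m n k * genA m n i * genS m n k *
          (genA m n i)⁻¹ * (genS m n k)⁻¹ * (genA m n i)⁻¹ * (genS m n k)⁻¹} ∪
  {x | ∃ (i r : Fin m) (k : Fin (n - 1)), (r : ℕ) < (i : ℕ) ∧ (k : ℕ) = 0 ∧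
      x = genA m n i * (genS m n k * genA m n r * (genS m n k)⁻¹) *
          (genA m n i)⁻¹ * (genS m n k * genA m n r * (genS m n k)⁻¹)⁻¹}

/-- The mixed braid group `B_{m,n}`. -/
abbrev MixedBraid (m n : ℕ) := PresentedGroup (mixedRels m n)

/-- The loop generator `a_i` (1-based, `1 ≤ i ≤ m`); junk value `1` out of range. -/
def aGen (m n i : ℕ) : MixedBraid m n :=
  if h : 1 ≤ i ∧ i ≤ m then PresentedGroup.of (Sum.inl ⟨i - 1, by omega⟩) else 1

/-- The braiding generator `σ_k` (1-based, `1 ≤ k ≤ n-1`); junk value `1` out of range. -/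
def sGen (m n k : ℕ) : MixedBraid m n :=
  if h : 1 ≤ k ∧ k ≤ n - 1 then PresentedGroup.of (Sum.inr ⟨k - 1, by omega⟩) else 1

/-- `λ_{l,1} := σ_l σ_{l-1} ⋯ σ_1`, with `λ_{0,1} := 1`. -/
def lamD (m n l : ℕ) : MixedBraid m n :=
  ((List.range l).map (fun t => sGen m n (l - t))).prod

/-- `λ_{1,l} := σ_1 σ_2 ⋯ σ_l`, with `λ_{1,0} := 1`. -/
def lamU (m n l : ℕ) : MixedBraid m n :=
  ((List.range l).map (fun t => sGen m n (t + 1))).prod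

/-!
The cable loop `C_j` is the product of the conjugates `λ_{l,1} a_j λ_{l,1}⁻¹`, `l < q`. In any
group, conjugating a product `∏ A_l` by a product `∏ B_l` gives `∏ B_l⁻¹ A_l B_l` as soon as each
new factor `A_p`, resp. `B_p`, commutes with the earlier `B_l`, resp. `B_l⁻¹ A_l B_l`.
These commutations are all instances of one statement: if `x` and `y` commute with every `σ_j`,
`j ≥ 2`, and `σ_1 x σ_1⁻¹` commutes with `y`, then `λ_{p,1} x λ_{p,1}⁻¹` commutes with
`λ_{l,1} y λ_{l,1}⁻¹` for `l < p`. The letters `σ_j`, `j ≥ l + 2`, commute with the second element,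
which reduces this to `p = l + 1`, and the braid relation reduces that case to `l = 0`.
For `(x, y) = (a_k, a_{k+1})` the hypothesis at `l = 0` is a defining relation; for
`(x, y) = (a_{k+1}, a_{k+1}⁻¹ a_k a_{k+1})` it follows from `a σ_1 a σ_1 = σ_1 a σ_1 a` and
`[a_{k+1}, σ_1 a_k σ_1⁻¹] = 1`.
-/

section Group

variable {G : Type*} [Group G]

theorem Commute.conj_left_of_commute {c w y : G} (hc : Commute c y) (h : Commute w y) :
    Commute (c * w * c⁻¹) y :=
  hc.mul_inv_cancel ▸ h.conj c

/-- Conjugation by `(s b)⁻¹` maps `b` to `s b s⁻¹` and `s a s⁻¹` to `b⁻¹ a b`. -/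
theorem commute_conj_inv_mul_mul_of_braid {a b s : G} (hb : b * s * b * s = s * b * s * b)
    (h : Commute (s * a * s⁻¹) b) : Commute (s * b * s⁻¹) (b⁻¹ * a * b) := by
  have hbs : (s * b)⁻¹ * b * (s * b)⁻¹⁻¹ = s * b * s⁻¹ := by
    calc _ = (s * b)⁻¹ * (b * s * b * s) * s⁻¹ := by group
      _ = s * b * s⁻¹ := by rw [hb]; group
  have hsa : (s * b)⁻¹ * (s * a * s⁻¹) * (s * b)⁻¹⁻¹ = b⁻¹ * a * b := by group
  simpa only [hbs, hsa] using h.symm.conj (s * b)⁻¹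

/-- Conjugation by `s₁` fixes `s₂ (s₁ A s₁⁻¹) s₂⁻¹`, by the braid relation and `[s₂, A] = 1`. -/
theorem commute_conj_of_braid {s₁ s₂ A B : G} (hb : s₁ * s₂ * s₁ = s₂ * s₁ * s₂)
    (hA : Commute s₂ A) (hB : Commute s₂ B) (h : Commute (s₁ * A * s₁⁻¹) B) :
    Commute (s₂ * (s₁ * A * s₁⁻¹) * s₂⁻¹) (s₁ * B * s₁⁻¹) := by
  have e : s₁ * (s₂ * (s₁ * A * s₁⁻¹) * s₂⁻¹) * s₁⁻¹ = s₂ * (s₁ * A * s₁⁻¹) * s₂⁻¹ :=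
    calc _ = (s₁ * s₂ * s₁) * A * (s₁ * s₂ * s₁)⁻¹ := by group
      _ = (s₂ * s₁) * (s₂ * A * s₂⁻¹) * (s₂ * s₁)⁻¹ := by rw [hb]; group
      _ = _ := by rw [hA.mul_inv_cancel]; group
  exact e ▸ (hB.conj_left_of_commute h).conj s₁

theorem inv_prod_range_mul_prod_range_mul_prod_range {A B : ℕ → G} {q : ℕ}
    (hA : ∀ l p, l < p → p < q → Commute (A p) (B l))
    (hB : ∀ l p, l < p → p < q → Commute (B p) ((B l)⁻¹ * A l * B l)) :
    ((List.range q).map B).prod⁻¹ * ((List.range q).map A).prod * ((List.range q).map B).prod =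
      ((List.range q).map fun l => (B l)⁻¹ * A l * B l).prod := by
  induction q with
  | zero => simp
  | succ t ih =>
    simp only [List.prod_range_succ]
    set PA := ((List.range t).map A).prod
    set PB := ((List.range t).map B).prod
    set PC := ((List.range t).map fun l => (B l)⁻¹ * A l * B l).prod
    have hPB : Commute (A t) PB := Commute.list_prod_right _ _ fun _ hz => by
      obtain ⟨l, hl, rfl⟩ := List.mem_map.1 hz
      exact hA l t (List.mem_range.1 hl) t.lt_succ_self
    have hPC : Commute (B t) PC := Commute.list_prod_right _ _ fun _ hz => by
      obtain ⟨l, hl, rfl⟩ := List.mem_map.1 hz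
      exact hB l t (List.mem_range.1 hl) t.lt_succ_self
    have hPC' : PB⁻¹ * PA * PB = PC :=
      ih (fun l p hlp hp => hA l p hlp (by omega)) (fun l p hlp hp => hB l p hlp (by omega))
    calc (PB * B t)⁻¹ * (PA * A t) * (PB * B t)
        = (B t)⁻¹ * (PB⁻¹ * PA * (A t * PB)) * B t := by group
      _ = (B t)⁻¹ * PC * (A t * B t) := by rw [hPB.eq, ← hPC']; group
      _ = PC * ((B t)⁻¹ * A t * B t) := by rw [hPC.inv_left.eq]; group

end Group

namespace MixedBraid

variable {m n : ℕ}

theorem sGen_commute_sGen {j t : ℕ} (h : j + 2 ≤ t) : Commute (sGen m n j) (sGen m n t) := by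
  unfold sGen
  split_ifs with hj ht
  · rw [← commutatorElement_eq_one_iff_commute, commutatorElement_def]
    exact PresentedGroup.one_of_mem
      (Or.inl (Or.inl (Or.inl (Or.inl ⟨_, _, by simp only; omega, rfl⟩))))
  all_goals simp

theorem sGen_braid {j : ℕ} (hj : 1 ≤ j) (hjn : j + 1 ≤ n - 1) :
    sGen m n j * sGen m n (j + 1) * sGen m n j =
      sGen m n (j + 1) * sGen m n j * sGen m n (j + 1) := by
  unfold sGen
  rw [dif_pos ⟨hj, by omega⟩, dif_pos ⟨by omega, hjn⟩]
  refine eq_of_mul_inv_eq_one (Eq.trans ?_ (PresentedGroup.one_of_mem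
    (Or.inl (Or.inl (Or.inl (Or.inr
      ⟨⟨j - 1, by omega⟩, ⟨j + 1 - 1, by omega⟩, by simp only; omega, rfl⟩))) : _ ∈ mixedRels m n)))
  simp only [map_mul, map_inv, mul_inv_rev, mul_assoc]
  rfl

theorem aGen_commute_sGen (i j : ℕ) (hj : 2 ≤ j) : Commute (aGen m n i) (sGen m n j) := by
  unfold aGen sGen
  split_ifs with hi hj'
  · rw [← commutatorElement_eq_one_iff_commute, commutatorElement_def]
    exact PresentedGroup.one_of_mem (Or.inl (Or.inl (Or.inr ⟨_, _, by simp only; omega, rfl⟩)))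
  all_goals simp

theorem aGen_sGen_one_braid (i : ℕ) :
    aGen m n i * sGen m n 1 * aGen m n i * sGen m n 1 =
      sGen m n 1 * aGen m n i * sGen m n 1 * aGen m n i := by
  unfold aGen sGen
  split_ifs with hi hn
  · refine eq_of_mul_inv_eq_one (Eq.trans ?_ (PresentedGroup.one_of_mem
      (Or.inl (Or.inr ⟨⟨i - 1, by omega⟩, ⟨1 - 1, by omega⟩, rfl, rfl⟩) : _ ∈ mixedRels m n)))
    simp only [map_mul, map_inv, mul_inv_rev, mul_assoc]
    rfl
  all_goals simp

theorem aGen_commute_conj_sGen_one {i r : ℕ} (hri : r < i) (hn : 2 ≤ n) :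
    Commute (aGen m n i) (sGen m n 1 * aGen m n r * (sGen m n 1)⁻¹) := by
  unfold aGen sGen
  split_ifs with hi hs hr
  · rw [← commutatorElement_eq_one_iff_commute, commutatorElement_def]
    exact PresentedGroup.one_of_mem (Or.inr ⟨_, _, _, by simp only; omega, rfl, rfl⟩)
  all_goals first | omega | simp

theorem lamD_succ (l : ℕ) : lamD m n (l + 1) = sGen m n (l + 1) * lamD m n l := by
  simp only [lamD, List.prod_range_succ', Nat.sub_zero, Nat.succ_sub_succ]

theorem lamD_succ_conj (l : ℕ) (x : MixedBraid m n) :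
    lamD m n (l + 1) * x * (lamD m n (l + 1))⁻¹ =
      sGen m n (l + 1) * (lamD m n l * x * (lamD m n l)⁻¹) * (sGen m n (l + 1))⁻¹ := by
  rw [lamD_succ]; group

theorem lamD_commute_sGen {l t : ℕ} (h : l + 2 ≤ t) : Commute (lamD m n l) (sGen m n t) := by
  induction l with
  | zero => exact Commute.one_left _
  | succ l ih => rw [lamD_succ]; exact (sGen_commute_sGen (by omega)).mul_left (ih (by omega))

theorem lamD_conj_commute_sGen {x : MixedBraid m n} (hx : ∀ j, 2 ≤ j → Commute x (sGen m n j))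
    {l t : ℕ} (h : l + 2 ≤ t) : Commute (lamD m n l * x * (lamD m n l)⁻¹) (sGen m n t) :=
  (lamD_commute_sGen h).conj_left_of_commute (hx t (by omega))

section Conjugates

variable {x y : MixedBraid m n}

theorem lamD_succ_conj_commute_lamD_conj (hx : ∀ j, 2 ≤ j → Commute x (sGen m n j))
    (hy : ∀ j, 2 ≤ j → Commute y (sGen m n j))
    (h₁ : Commute (sGen m n 1 * x * (sGen m n 1)⁻¹) y) {l : ℕ} (hl : l + 1 ≤ n - 1) :
    Commute (lamD m n (l + 1) * x * (lamD m n (l + 1))⁻¹) (lamD m n l * y * (lamD m n l)⁻¹) := by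
  induction l with
  | zero => simpa [lamD_succ_conj, lamD] using h₁
  | succ l ih =>
    rw [lamD_succ_conj (l + 1), lamD_succ_conj l x, lamD_succ_conj l y]
    exact commute_conj_of_braid (sGen_braid (by omega) (by omega))
      (lamD_conj_commute_sGen hx le_rfl).symm (lamD_conj_commute_sGen hy le_rfl).symm
      (lamD_succ_conj l x ▸ ih (by omega))

theorem lamD_conj_commute_lamD_conj (hx : ∀ j, 2 ≤ j → Commute x (sGen m n j))
    (hy : ∀ j, 2 ≤ j → Commute y (sGen m n j))
    (h₁ : Commute (sGen m n 1 * x * (sGen m n 1)⁻¹) y) {l p : ℕ} (hlp : l < p) (hp : p ≤ n - 1) :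
    Commute (lamD m n p * x * (lamD m n p)⁻¹) (lamD m n l * y * (lamD m n l)⁻¹) := by
  induction p, hlp using Nat.le_induction with
  | base => exact lamD_succ_conj_commute_lamD_conj hx hy h₁ hp
  | succ p hlp ih =>
    rw [lamD_succ_conj]
    exact (lamD_conj_commute_sGen hy (by omega)).symm.conj_left_of_commute (ih (by omega))

end Conjugates

end MixedBraid

open MixedBraid in
theorem combing_cabling_commute_general_general (m n k q : ℕ) (hq2 : q ≤ n) :
    (((List.range q).map
        (fun l => lamD m n l * aGen m n (k + 1) * (lamD m n l)⁻¹)).prod)⁻¹ *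
      ((List.range q).map
        (fun l => lamD m n l * aGen m n k * (lamD m n l)⁻¹)).prod *
      ((List.range q).map
        (fun l => lamD m n l * aGen m n (k + 1) * (lamD m n l)⁻¹)).prod =
    ((List.range q).map
      (fun l => lamD m n l *
        ((aGen m n (k + 1))⁻¹ * aGen m n k * aGen m n (k + 1)) * (lamD m n l)⁻¹)).prod := by
  have hconj (l : ℕ) (a b : MixedBraid m n) :
      lamD m n l * (b⁻¹ * a * b) * (lamD m n l)⁻¹ =
        (lamD m n l * b * (lamD m n l)⁻¹)⁻¹ * (lamD m n l * a * (lamD m n l)⁻¹) *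
          (lamD m n l * b * (lamD m n l)⁻¹) := by group
  have ha := aGen_commute_sGen (m := m) (n := n)
  have hk (hn : 2 ≤ n) := (aGen_commute_conj_sGen_one (m := m) k.lt_succ_self hn).symm
  have hy (j : ℕ) (hj : 2 ≤ j) :
      Commute ((aGen m n (k + 1))⁻¹ * aGen m n k * aGen m n (k + 1)) (sGen m n j) :=
    ((ha _ j hj).inv_left.mul_left (ha k j hj)).mul_left (ha _ j hj)
  simp_rw [hconj]
  refine inv_prod_range_mul_prod_range_mul_prod_range (fun l p hlp hpq => ?_)
    (fun l p hlp hpq => ?_)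
  · exact lamD_conj_commute_lamD_conj (ha k) (ha (k + 1)) (hk (by omega)) hlp (by omega)
  · rw [← hconj]
    exact lamD_conj_commute_lamD_conj (ha (k + 1)) hy
      (commute_conj_inv_mul_mul_of_braid (aGen_sGen_one_braid (k + 1)) (hk (by omega))) hlp
      (by omega)

/-- Combing and cabling commute for a general `q`-strand cable: combing the cable
as a single thickened strand equals combing its strands one by one. -/
theorem combing_cabling_commute_general (m n k q : ℕ) (hm : 2 ≤ m) (hn : 1 ≤ n)
    (hk1 : 1 ≤ k) (hk2 : k ≤ m - 1) (hq1 : 1 ≤ q) (hq2 : q ≤ n) :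
    (((List.range q).map
        (fun l => lamD m n l * aGen m n (k + 1) * (lamD m n l)⁻¹)).prod)⁻¹ *
      ((List.range q).map
        (fun l => lamD m n l * aGen m n k * (lamD m n l)⁻¹)).prod *
      ((List.range q).map
        (fun l => lamD m n l * aGen m n (k + 1) * (lamD m n l)⁻¹)).prod =
    ((List.range q).map
      (fun l => lamD m n l *
        ((aGen m n (k + 1))⁻¹ * aGen m n k * aGen m n (k + 1)) * (lamD m n l)⁻¹)).prod :=
  combing_cabling_commute_general_general m n k q hq2
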